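/- Let ψ be a structural set of ℍ, let ρ ∈ ℍ be invertible with γ := ρ⁻¹(1−ρ) = Σ_k ψ_k γ_k, γ_k ∈ ℝ. For f ∈ C¹(Ω, ℍ) define the right operator ᵠD_r^{ρ} f = f(1−ρ) + (ᵠD_r f)ρ, where ᵠD_r f = Σ_k (∂_k f)ψ_k. Then e^{−Σ_k x_k γ_k} · ᵠD_r[ e^{Σ_k x_k γ_k} f ](x) · ρ = (ᵠD_r^{ρ} f)(x) for all x ∈ Ω. -/

import Mathlib

/-!
The weight `e^{Σ x_k γ_k}` is real-valued, so the Leibniz rule moves it through the right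
Fueter operator, leaving the extra term `f · Σ_k γ_k ψ_k = f ρ⁻¹(1 − ρ)`. Multiplying on the right
by `ρ`, which commutes with `1 − ρ`, turns this into `f (1 − ρ)`.
-/

open scoped Quaternion

def IsStructuralSet (ψ : Fin 4 → ℍ[ℝ]) : Prop :=
  ∀ k s : Fin 4,
    (1 / 2 : ℝ) • (star (ψ k) * ψ s + star (ψ s) * ψ k) = if k = s then 1 else 0

/-- Partial derivative `∂_k f` of an ℍ-valued function on ℝ⁴. -/
noncomputable def pderivQ (k : Fin 4) (f : (Fin 4 → ℝ) → ℍ[ℝ]) (x : Fin 4 → ℝ) : ℍ[ℝ] :=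
  fderiv ℝ f x (Pi.single k 1)

/-- Partial derivative `∂_k u` of a real-valued function on ℝ⁴. -/
noncomputable def pderivR (k : Fin 4) (u : (Fin 4 → ℝ) → ℝ) (x : Fin 4 → ℝ) : ℝ :=
  fderiv ℝ u x (Pi.single k 1)

/-- The left ψ-Fueter operator `ᵠD[f] = Σ_k ψ_k ∂_k f`. -/
noncomputable def fueterL (ψ : Fin 4 → ℍ[ℝ]) (f : (Fin 4 → ℝ) → ℍ[ℝ]) (x : Fin 4 → ℝ) :
    ℍ[ℝ] := ∑ k : Fin 4, ψ k * pderivQ k f x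

/-- The right ψ-Fueter operator `ᵠD_r[g] = Σ_k (∂_k g) ψ_k`. -/
noncomputable def fueterR (ψ : Fin 4 → ℍ[ℝ]) (g : (Fin 4 → ℝ) → ℍ[ℝ]) (x : Fin 4 → ℝ) :
    ℍ[ℝ] := ∑ k : Fin 4, pderivQ k g x * ψ k

theorem Commute.inv_mul_cancel₀ {G₀ : Type*} [GroupWithZero G₀] {a b : G₀} (h : Commute a b)
    (ha : a ≠ 0) : a⁻¹ * b * a = b := by
  rw [h.inv_left₀.eq, inv_mul_cancel_right₀ ha]

lemma pderivQ_smul {u : (Fin 4 → ℝ) → ℝ} {f : (Fin 4 → ℝ) → ℍ[ℝ]} {x : Fin 4 → ℝ}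
    (hu : DifferentiableAt ℝ u x) (hf : DifferentiableAt ℝ f x) (k : Fin 4) :
    pderivQ k (fun y => u y • f y) x = u x • pderivQ k f x + pderivR k u x • f x := by
  simp only [pderivQ, pderivR, fderiv_fun_smul hu hf, add_apply,
    smul_apply, ContinuousLinearMap.smulRight_apply]

lemma fueterR_smul (ψ : Fin 4 → ℍ[ℝ]) {u : (Fin 4 → ℝ) → ℝ} {f : (Fin 4 → ℝ) → ℍ[ℝ]}
    {x : Fin 4 → ℝ} (hu : DifferentiableAt ℝ u x) (hf : DifferentiableAt ℝ f x) :
    fueterR ψ (fun y => u y • f y) x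
      = u x • fueterR ψ f x + f x * ∑ k : Fin 4, pderivR k u x • ψ k := by
  simp only [fueterR, pderivQ_smul hu hf, add_mul, Finset.sum_add_distrib, Finset.smul_sum,
    Finset.mul_sum, smul_mul_assoc, mul_smul_comm]

lemma hasFDerivAt_exp_sum_mul (γ : Fin 4 → ℝ) (x : Fin 4 → ℝ) :
    HasFDerivAt (fun y : Fin 4 → ℝ => Real.exp (∑ k, y k * γ k))
      (Real.exp (∑ k, x k * γ k) • ∑ k, γ k • ContinuousLinearMap.proj (R := ℝ) k) x :=
  (HasFDerivAt.fun_sum fun k _ => (hasFDerivAt_apply k x).mul_const (γ k)).exp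

lemma pderivR_exp_sum_mul (γ : Fin 4 → ℝ) (x : Fin 4 → ℝ) (k : Fin 4) :
    pderivR k (fun y => Real.exp (∑ j, y j * γ j)) x = Real.exp (∑ j, x j * γ j) * γ k := by
  simp [pderivR, (hasFDerivAt_exp_sum_mul γ x).fderiv, Pi.single_apply]

theorem fueterR_prop_conjugation_general (ψ : Fin 4 → ℍ[ℝ])
    (Ω : Set (Fin 4 → ℝ)) (hΩ : IsOpen Ω)
    (ρ : ℍ[ℝ]) (hρ : ρ ≠ 0) (γ : Fin 4 → ℝ)
    (hγ : ρ⁻¹ * (1 - ρ) = ∑ k : Fin 4, γ k • ψ k)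
    (f : (Fin 4 → ℝ) → ℍ[ℝ]) (hf : ContDiffOn ℝ 1 f Ω)
    (x : Fin 4 → ℝ) (hx : x ∈ Ω) :
    Real.exp (-∑ k : Fin 4, x k * γ k) •
        (fueterR ψ (fun y => Real.exp (∑ k : Fin 4, y k * γ k) • f y) x * ρ)
      = f x * (1 - ρ) + fueterR ψ f x * ρ := by
  have hfx : DifferentiableAt ℝ f x :=
    (hf.contDiffAt (hΩ.mem_nhds hx)).differentiableAt one_ne_zero
  have hconj : ρ⁻¹ * (1 - ρ) * ρ = 1 - ρ :=
    ((Commute.one_right ρ).sub_right (Commute.refl ρ)).inv_mul_cancel₀ hρ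
  have hweight : ∑ k, pderivR k (fun y => Real.exp (∑ j, y j * γ j)) x • ψ k
      = Real.exp (∑ k, x k * γ k) • (ρ⁻¹ * (1 - ρ)) := by
    simp only [pderivR_exp_sum_mul, mul_smul, ← Finset.smul_sum, hγ]
  rw [fueterR_smul ψ (hasFDerivAt_exp_sum_mul γ x).differentiableAt hfx, hweight, mul_smul_comm,
    ← smul_add, smul_mul_assoc, smul_smul, ← Real.exp_add, neg_add_cancel, Real.exp_zero,
    one_smul, add_mul, mul_assoc, hconj, add_comm]

/-- right-operator counterpart. With `ρ ∈ ℍ` invertible,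
`γ = ρ⁻¹(1−ρ) = Σ_k ψ_k γ_k` (`γ_k ∈ ℝ`), and `ᵠD_r^{ρ} f = f(1−ρ) + (ᵠD_r f)ρ`, one has
`e^{−Σ x_k γ_k} ᵠD_r[e^{Σ x_k γ_k} f](x) ρ = (ᵠD_r^{ρ} f)(x)`. -/
theorem fueterR_prop_conjugation (ψ : Fin 4 → ℍ[ℝ]) (hψ : IsStructuralSet ψ)
    (Ω : Set (Fin 4 → ℝ)) (hΩ : IsOpen Ω)
    (ρ : ℍ[ℝ]) (hρ : ρ ≠ 0) (γ : Fin 4 → ℝ)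
    (hγ : ρ⁻¹ * (1 - ρ) = ∑ k : Fin 4, γ k • ψ k)
    (f : (Fin 4 → ℝ) → ℍ[ℝ]) (hf : ContDiffOn ℝ 1 f Ω)
    (x : Fin 4 → ℝ) (hx : x ∈ Ω) :
    Real.exp (-∑ k : Fin 4, x k * γ k) •
        (fueterR ψ (fun y => Real.exp (∑ k : Fin 4, y k * γ k) • f y) x * ρ)
      = f x * (1 - ρ) + fueterR ψ f x * ρ :=
  fueterR_prop_conjugation_general ψ Ω hΩ ρ hρ γ hγ f hf x hx
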